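/- Let P and Q be convex polytopes in R^d with P ∪ Q convex, and let H be a supporting hyperplane of P ∩ Q. Then at least one of P, Q lies entirely in one of the closed half-spaces determined by H. -/

import Mathlib

/-!
If both `P` and `Q` had a point strictly above the hyperplane, the segment joining them would
lie in the convex set `P ∪ Q`; being connected and covered by the closed sets `P` and `Q`, it
meets `P ∩ Q`, at a point strictly above the hyperplane since the open half-space is convex.
-/

open Pointwise

/-- A face of a set `P` (in the sense of convex polytopes): either `P` itself or the
intersection of `P` with a supporting hyperplane. -/
def IsFaceOf {d : ℕ} (F P : Set (EuclideanSpace ℝ (Fin d))) : Prop :=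
  F = P ∨ ∃ (f : EuclideanSpace ℝ (Fin d) →ₗ[ℝ] ℝ) (c : ℝ), f ≠ 0 ∧
    (∀ x ∈ P, f x ≤ c) ∧ F = {x | x ∈ P ∧ f x = c}

/-- The dimension of a set: the dimension of its affine hull. -/
noncomputable def dimSet {d : ℕ} (F : Set (EuclideanSpace ℝ (Fin d))) : ℕ :=
  Module.finrank ℝ (affineSpan ℝ F).direction

/-- A convex polytope: the convex hull of finitely many points. -/
def IsPolytope {d : ℕ} (P : Set (EuclideanSpace ℝ (Fin d))) : Prop :=
  ∃ S : Finset (EuclideanSpace ℝ (Fin d)), S.Nonempty ∧ P = convexHull ℝ (S : Set _)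

theorem IsPolytope.isClosed {d : ℕ} {P : Set (EuclideanSpace ℝ (Fin d))} (hP : IsPolytope P) :
    IsClosed P := by
  obtain ⟨S, -, rfl⟩ := hP
  exact (S.finite_toSet.isCompact_convexHull ℝ).isClosed

theorem Convex.segment_inter_inter_nonempty_of_isClosed {E : Type*} [AddCommGroup E]
    [Module ℝ E] [TopologicalSpace E] [ContinuousAdd E] [ContinuousSMul ℝ E] {P Q : Set E}
    (hPc : IsClosed P) (hQc : IsClosed Q) (hU : Convex ℝ (P ∪ Q)) {p q : E} (hp : p ∈ P)
    (hq : q ∈ Q) : (segment ℝ p q ∩ (P ∩ Q)).Nonempty :=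
  isPreconnected_closed_iff.mp (convex_segment p q).isPreconnected P Q hPc hQc
    (hU.segment_subset (.inl hp) (.inr hq)) ⟨p, left_mem_segment ℝ p q, hp⟩
    ⟨q, right_mem_segment ℝ p q, hq⟩

theorem supporting_hyperplane_side_general {d : ℕ} (P Q : Set (EuclideanSpace ℝ (Fin d)))
    (hP : IsPolytope P) (hQ : IsPolytope Q) (hU : Convex ℝ (P ∪ Q))
    (f : EuclideanSpace ℝ (Fin d) →ₗ[ℝ] ℝ) (c : ℝ)
    (hside : ∀ x ∈ P ∩ Q, f x ≤ c) :
    (∀ x ∈ P, f x ≤ c) ∨ (∀ x ∈ P, c ≤ f x) ∨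
    (∀ x ∈ Q, f x ≤ c) ∨ (∀ x ∈ Q, c ≤ f x) := by
  by_contra! h
  obtain ⟨⟨p, hpP, hpc⟩, -, ⟨q, hqQ, hqc⟩, -⟩ := h
  obtain ⟨x, hx, hxPQ⟩ :=
    hU.segment_inter_inter_nonempty_of_isClosed hP.isClosed hQ.isClosed hpP hqQ
  have hcx : c < f x := (convex_halfSpace_gt f.isLinear c).segment_subset hpc hqc hx
  exact (hside x hxPQ).not_gt hcx

/-- let `P ∪ Q` be convex and let `{f = c}` be a supporting hyperplane of
`P ∩ Q`. Then at least one of `P`, `Q` lies entirely in one of the two closed half-spaces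
determined by this hyperplane. -/
theorem supporting_hyperplane_side {d : ℕ} (P Q : Set (EuclideanSpace ℝ (Fin d)))
    (hP : IsPolytope P) (hQ : IsPolytope Q) (hU : Convex ℝ (P ∪ Q))
    (f : EuclideanSpace ℝ (Fin d) →ₗ[ℝ] ℝ) (c : ℝ) (hf : f ≠ 0)
    (hside : ∀ x ∈ P ∩ Q, f x ≤ c) (htouch : ∃ x ∈ P ∩ Q, f x = c) :
    (∀ x ∈ P, f x ≤ c) ∨ (∀ x ∈ P, c ≤ f x) ∨
    (∀ x ∈ Q, f x ≤ c) ∨ (∀ x ∈ Q, c ≤ f x) :=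
  supporting_hyperplane_side_general P Q hP hQ hU f c hside
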